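/- arXiv:math/0503649 — 2 statements merged into one kernel-verified Lean document; each statement's English description precedes it below -/
import Mathlib

section
/- Let A and B be finite nonempty subsets of an abelian group and let δ > 0 be a real number such that |A| = n and |A + B| ≤ δ·n. Then for all integers k ≥ 1 and l ≥ 1, the iterated sum–difference set satisfies |kB − lB| ≤ δ^{k+l}·n, where kB − lB = {b₁ + ⋯ + b_k − b'₁ − ⋯ − b'_l : bᵢ, b'ⱼ ∈ B}. -/
open Pointwise

/-- **Plünnecke-type inequality.** Let `A` and `B` be finite nonempty subsets
of an abelian group and `δ > 0` a real with `|A| = n` and `|A + B| ≤ δ·n`. Then for all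
integers `k, l ≥ 1`, `|kB − lB| ≤ δ^{k+l}·n`, where `kB` is the `k`-fold sumset of `B`. -/
theorem stmt_9 {G : Type*} [AddCommGroup G] [DecidableEq G]
    (A B : Finset G) (hA : A.Nonempty) (hB : B.Nonempty)
    (δ : ℝ) (hδ : 0 < δ) (n : ℕ) (hn : A.card = n)
    (hAB : ((A + B).card : ℝ) ≤ δ * n) :
    ∀ k l : ℕ, 1 ≤ k → 1 ≤ l →
      (((k • B - l • B).card : ℝ)) ≤ δ ^ (k + l) * n := by
  intro k l _ _
  have key := Finset.pluennecke_ruzsa_inequality_nsmul_sub_nsmul_add hA B k l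
  have hn0 : (0 : ℝ) < n := by
    have := hA.card_pos; rw [hn] at this; exact_mod_cast this
  have key' : ((k • B - l • B).card : ℝ) ≤ (((A + B).card : ℝ) / n) ^ (k + l) * n := by
    have := (NNRat.cast_le (K := ℝ)).2 key
    push_cast at this
    rwa [hn] at this
  refine key'.trans ?_
  gcongr
  rw [div_le_iff₀ hn0]; exact hAB
end

section
/- For every integer d ≥ 1, every real δ ≥ 1, and every vector v = (x₁, …, x_d) of nonzero integers, there is a constant c > 0 depending only on d, δ and v such that the following holds. If A is a finite nonempty set of real numbers with |A + A| ≤ δ·|A|, then the set {x₁·a₁ + x₂·a₂ + ⋯ + x_d·a_d : a₁, …, a_d ∈ A} has at most c·|A| elements; equivalently, the d-fold Cartesian product A × ⋯ × A ⊆ ℝ^d can be covered by at most c·|A| hyperplanes with common normal vector v. -/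
open Pointwise

lemma stmt_10_aux {ι : Type*} (A : Finset ℝ) (s : Finset ι) (k : ι → ℕ) (a : ι → ℝ)
    (ha : ∀ i ∈ s, a i ∈ A) :
    (∑ i ∈ s, (k i) • a i) ∈ (∑ i ∈ s, k i) • A := by
  induction s using Finset.cons_induction with
  | empty => simp
  | cons i s hi ih =>
    rw [Finset.sum_cons, Finset.sum_cons, add_nsmul]
    exact Finset.add_mem_add (Finset.nsmul_mem_nsmul (ha i (Finset.mem_cons_self i s)))
      (ih fun j hj => ha j (Finset.mem_cons_of_mem hj))

/-- For every integer `d ≥ 1`, every real `δ ≥ 1`, and every vector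
`v = (x₁, …, x_d)` of nonzero integers, there is a constant `c > 0` depending only on `d`,
`δ` and `v` such that: if `A` is a finite nonempty set of reals with `|A + A| ≤ δ·|A|`,
then `{x₁·a₁ + ⋯ + x_d·a_d : a₁, …, a_d ∈ A}` has at most `c·|A|` elements (equivalently,
`A × ⋯ × A ⊆ ℝ^d` can be covered by at most `c·|A|` hyperplanes with normal vector `v`). -/
theorem stmt_10 (d : ℕ) (hd : 1 ≤ d) (δ : ℝ) (hδ : 1 ≤ δ)
    (v : Fin d → ℤ) (hv : ∀ i, v i ≠ 0) :
    ∃ c : ℝ, 0 < c ∧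
      ∀ A : Finset ℝ, A.Nonempty →
        ((A + A).card : ℝ) ≤ δ * (A.card : ℝ) →
        ({s : ℝ | ∃ a : Fin d → ℝ, (∀ i, a i ∈ A) ∧
            s = ∑ i, (v i : ℝ) * a i}.ncard : ℝ) ≤ c * (A.card : ℝ) := by
  set m : ℕ := ∑ i, (v i).toNat with hm
  set n : ℕ := ∑ i, (-(v i)).toNat with hn
  refine ⟨δ ^ (m + n), by positivity, ?_⟩
  intro A hA hcard
  have hA0 : (0 : ℝ) < A.card := by exact_mod_cast hA.card_pos
  -- The set is contained in the finset `m • A - n • A`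
  have hsub : {s : ℝ | ∃ a : Fin d → ℝ, (∀ i, a i ∈ A) ∧
      s = ∑ i, (v i : ℝ) * a i} ⊆ (m • A - n • A : Finset ℝ) := by
    rintro s ⟨a, ha, rfl⟩
    have key : ∑ i, (v i : ℝ) * a i
        = (∑ i, ((v i).toNat) • a i) - ∑ i, ((-(v i)).toNat) • a i := by
      rw [← Finset.sum_sub_distrib]
      refine Finset.sum_congr rfl fun i _ => ?_
      have h1 : (((v i).toNat : ℤ) : ℝ) - (((-(v i)).toNat : ℤ) : ℝ) = ((v i : ℤ) : ℝ) := by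
        rw [← Int.cast_sub, Int.toNat_sub_toNat_neg]
      push_cast at h1 ⊢
      rw [nsmul_eq_mul, nsmul_eq_mul, ← sub_mul, h1]
    rw [key]
    exact Finset.coe_subset.mpr (subset_refl _) <| Finset.sub_mem_sub
      (stmt_10_aux A Finset.univ _ a fun i _ => ha i)
      (stmt_10_aux A Finset.univ _ a fun i _ => ha i)
  have hncard : ({s : ℝ | ∃ a : Fin d → ℝ, (∀ i, a i ∈ A) ∧
      s = ∑ i, (v i : ℝ) * a i}.ncard : ℝ) ≤ ((m • A - n • A : Finset ℝ).card : ℝ) := by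
    have := Set.ncard_le_ncard hsub (Finset.finite_toSet _)
    rw [Set.ncard_coe_finset] at this
    exact_mod_cast this
  have hPR := Finset.pluennecke_ruzsa_inequality_nsmul_sub_nsmul_add hA A m n
  have hPR' : ((m • A - n • A : Finset ℝ).card : ℝ)
      ≤ (((A + A).card : ℝ) / (A.card : ℝ)) ^ (m + n) * (A.card : ℝ) := by
    have h2 := (NNRat.cast_le (K := ℝ)).mpr hPR
    push_cast at h2
    exact h2
  refine hncard.trans (hPR'.trans ?_)
  have hbase : ((A + A).card : ℝ) / (A.card : ℝ) ≤ δ := by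
    rw [div_le_iff₀ hA0]; exact hcard
  have hbase0 : (0:ℝ) ≤ ((A + A).card : ℝ) / (A.card : ℝ) := by positivity
  gcongr
end
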